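/- Suppose n > 1 factors as n = p₁^{α₁} p₂^{α₂} ⋯ p_k^{α_k} with 2 = p₁ < p₂ < ⋯ < p_k, and suppose that for each 1 < i ≤ k we have p_i = τ(p₁^{α₁} ⋯ p_{i−1}^{α_{i−1}}) + 1. Then n is an almost-covering number: one can cover exactly n−1 of the residue classes modulo n using congruences with distinct moduli that are divisors of n greater than 1, and no such system covers all n classes. -/

import Mathlib

open scoped Classical

noncomputable def coveredCount (n : ℕ) (D : Finset ℕ) (a : ℕ → ℤ) : ℕ :=
  ((Finset.range n).filter (fun x => ∃ m ∈ D, (x : ℤ) ≡ a m [ZMOD (m : ℤ)])).card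

noncomputable def maxCovered (n : ℕ) : ℕ :=
  sSup {k | ∃ (D : Finset ℕ) (a : ℕ → ℤ),
    D ⊆ n.divisors ∧ (∀ m ∈ D, 1 < m) ∧ k = coveredCount n D a}

lemma coveredCount_eq (n : ℕ) (D : Finset ℕ) (a : ℕ → ℤ) :
    coveredCount n D a
      = ((Finset.range n).filter (fun x : ℕ => ∃ m ∈ D, (x : ℤ) ≡ a m [ZMOD (m : ℤ)])).card := by
  rw [coveredCount]
  have hbind : (do
      let a ← Finset.range n
      pure ((a : ℕ) : ℤ) : Finset ℤ) = (Finset.range n).image (fun x : ℕ => (x : ℤ)) := by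
    ext z
    simp
  rw [hbind, Finset.filter_image,
    Finset.card_image_of_injective _ (fun x y h => by exact_mod_cast h)]

/-- The chain condition of Sun's theorem. -/
inductive SunChain : ℕ → Prop
  | one : SunChain 1
  | step (m q β : ℕ) : SunChain m → q.Prime → ¬ q ∣ m → 1 ≤ β →
      m.divisors.card + 1 = q → SunChain (m * q ^ β)

lemma SunChain.pos {n : ℕ} (h : SunChain n) : 0 < n := by
  induction h with
  | one => norm_num
  | step m q β hm hq hqm hβ hτ ih => exact Nat.mul_pos ih (pow_pos hq.pos β)

lemma geom_aux (q : ℕ) (hq : 1 ≤ q) : ∀ β : ℕ, (q - 1) * ∑ i ∈ Finset.range β, q ^ i + 1 = q ^ β := by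
  intro β
  induction β with
  | zero => simp
  | succ β ih =>
      rw [Finset.sum_range_succ, Nat.mul_add, pow_succ]
      calc (q - 1) * ∑ i ∈ Finset.range β, q ^ i + (q - 1) * q ^ β + 1
          = ((q - 1) * ∑ i ∈ Finset.range β, q ^ i + 1) + (q - 1) * q ^ β := by ring
        _ = q ^ β + (q - 1) * q ^ β := by rw [ih]
        _ = (1 + (q - 1)) * q ^ β := by ring
        _ = q ^ β * q := by rw [show 1 + (q - 1) = q by omega]; ring

lemma sum_Icc_pow (q β : ℕ) : ∑ j ∈ Finset.Icc 1 β, q ^ (β - j) = ∑ i ∈ Finset.range β, q ^ i := by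
  rw [show Finset.Icc 1 β = Finset.Ico 1 (β + 1) by rfl, Finset.sum_Ico_eq_sum_range]
  rw [show β + 1 - 1 = β from rfl]
  rw [← Finset.sum_range_reflect (fun i => q ^ i) β]
  refine Finset.sum_congr rfl fun i hi => ?_
  simp only [Finset.mem_range] at hi
  congr 1
  omega

/-- counting residues in a range -/
lemma card_range_filter_modEq (r R : ℕ) (hr : 0 < r) (c : ℤ) :
    ((Finset.range (r * R)).filter (fun y : ℕ => (y : ℤ) ≡ c [ZMOD ((r : ℕ) : ℤ)])).card = R := by
  have hc0 : (0:ℤ) ≤ c % (r:ℤ) := Int.emod_nonneg c (by exact_mod_cast hr.ne')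
  have hcr : c % (r:ℤ) < (r:ℤ) := Int.emod_lt_of_pos c (by exact_mod_cast hr)
  set c' : ℕ := (c % (r:ℤ)).toNat with hc'
  have hc'cast : (c' : ℤ) = c % (r:ℤ) := Int.toNat_of_nonneg hc0
  have hc'lt : c' < r := by omega
  have himg : (Finset.range (r * R)).filter (fun y : ℕ => (y : ℤ) ≡ c [ZMOD ((r : ℕ) : ℤ)])
      = (Finset.range R).image (fun t => c' + t * r) := by
    ext y
    simp only [Finset.mem_filter, Finset.mem_range, Finset.mem_image]
    constructor
    · rintro ⟨hy, hmod⟩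
      have h1 : (y:ℤ) % (r:ℤ) = c % (r:ℤ) := hmod
      have h2 : ((y % r : ℕ) : ℤ) = (c' : ℤ) := by
        rw [hc'cast, ← h1]; push_cast; ring
      have h3 : y % r = c' := by exact_mod_cast h2
      refine ⟨y / r, ?_, ?_⟩
      · exact Nat.div_lt_of_lt_mul (by omega)
      · rw [← h3]; exact Nat.mod_add_div' y r
    · rintro ⟨t, ht, rfl⟩
      constructor
      · calc c' + t * r < (t + 1) * r := by nlinarith
          _ ≤ R * r := Nat.mul_le_mul_right r (by omega)
          _ = r * R := Nat.mul_comm R r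
      · show ((c' + t * r : ℕ) : ℤ) % r = c % r
        push_cast
        rw [Int.add_mul_emod_self_right, hc'cast, Int.emod_emod_of_dvd c dvd_rfl]
  rw [himg, Finset.card_image_of_injective _ (fun t₁ t₂ h => by
    exact Nat.eq_of_mul_eq_mul_right hr (Nat.add_left_cancel h)), Finset.card_range]
/-- decomposition of a divisor of `m * q ^ β` divisible by `q` -/
lemma divisor_decomp {m q β d : ℕ} (hq : q.Prime) (hqm : ¬ q ∣ m) (hm : m ≠ 0)
    (hd : d ∣ m * q ^ β) (hd0 : d ≠ 0) (hqd : q ∣ d) :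
    1 ≤ d.factorization q ∧ d.factorization q ≤ β ∧
      (d / q ^ d.factorization q) ∣ m ∧ ¬ q ∣ (d / q ^ d.factorization q) ∧
      q ^ d.factorization q * (d / q ^ d.factorization q) = d := by
  set j := d.factorization q with hj
  have h1 : 1 ≤ j := Nat.Prime.factorization_pos_of_dvd hq hd0 hqd
  have hqj : q ^ j ∣ d := Nat.ordProj_dvd d q
  have hcopqm : Nat.Coprime q m := (Nat.Prime.coprime_iff_not_dvd hq).mpr hqm
  have h2 : j ≤ β := by
    have hqjm : q ^ j ∣ m * q ^ β := hqj.trans hd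
    have : q ^ j ∣ q ^ β := (Nat.Coprime.pow_left j hcopqm).dvd_of_dvd_mul_left hqjm
    exact (Nat.pow_dvd_pow_iff_le_right hq.one_lt).mp this
  have hqe : ¬ q ∣ (d / q ^ j) := Nat.not_dvd_ordCompl hq hd0
  have hself : q ^ j * (d / q ^ j) = d := Nat.ordProj_mul_ordCompl_eq_self d q
  refine ⟨h1, h2, ?_, hqe, hself⟩
  have hed : (d / q ^ j) ∣ d := Nat.ordCompl_dvd d q
  have hcop : Nat.Coprime (d / q ^ j) (q ^ β) :=
    Nat.Coprime.pow_right β (((Nat.Prime.coprime_iff_not_dvd hq).mpr hqe).symm)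
  exact Nat.Coprime.dvd_of_dvd_mul_right hcop (hed.trans hd)

/-- main upper bound: a SunChain number cannot be fully covered -/
lemma sunchain_uncovered {n : ℕ} (h : SunChain n) :
    ∀ (D : Finset ℕ) (a : ℕ → ℤ), D ⊆ n.divisors → (∀ m ∈ D, 1 < m) →
      ∃ x < n, ∀ d ∈ D, ¬ (x : ℤ) ≡ a d [ZMOD (d : ℤ)] := by
  induction h with
  | one =>
    intro D a hD h1
    refine ⟨0, one_pos, fun d hd => ?_⟩
    have hmem := hD hd
    rw [Nat.divisors_one, Finset.mem_singleton] at hmem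
    exact absurd (h1 d hd) (by simp [hmem])
  | step m q β hm hq hqm hβ hτ ih =>
    intro D a hD h1
    have hm0 : 0 < m := hm.pos
    have hq2 : 2 ≤ q := hq.two_le
    have hn0 : 0 < m * q ^ β := Nat.mul_pos hm0 (pow_pos hq.pos β)
    -- facts about elements of D
    have hDdvd : ∀ d ∈ D, d ∣ m * q ^ β ∧ d ≠ 0 := by
      intro d hd
      have := hD hd
      rw [Nat.mem_divisors] at this
      exact ⟨this.1, fun h0 => by simp [h0] at this; omega⟩
    set v : ℕ → ℕ := fun d => d.factorization q with hv
    set D₁ : Finset ℕ := D.filter (fun d => q ∣ d) with hD₁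
    set f : ℕ → Finset ℕ := fun d =>
      (Finset.range (q ^ β)).filter (fun y : ℕ => (y : ℤ) ≡ a d [ZMOD ((q ^ v d : ℕ) : ℤ)]) with hf
    set T : Finset ℕ := D₁.biUnion f with hT
    -- decomposition facts for d ∈ D₁
    have hdec : ∀ d ∈ D₁, 1 ≤ v d ∧ v d ≤ β ∧ (d / q ^ v d) ∣ m ∧
        q ^ v d * (d / q ^ v d) = d := by
      intro d hd
      rw [hD₁, Finset.mem_filter] at hd
      obtain ⟨hdvd, hd0⟩ := hDdvd d hd.1
      obtain ⟨a1, a2, a3, _, a5⟩ := divisor_decomp hq hqm hm0.ne' hdvd hd0 hd.2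
      exact ⟨a1, a2, a3, a5⟩
    -- cardinality bound for T
    have hTcard : T.card ≤ q ^ β - 1 := by
      have hb : T.card ≤ ∑ d ∈ D₁, (f d).card := Finset.card_biUnion_le
      have hcards : ∀ d ∈ D₁, (f d).card = q ^ (β - v d) := by
        intro d hd
        obtain ⟨h1', h2', _, _⟩ := hdec d hd
        have hsplit : q ^ β = q ^ v d * q ^ (β - v d) := by
          rw [← pow_add]; congr 1; omega
        rw [hf]
        simp only
        rw [hsplit]
        exact card_range_filter_modEq (q ^ v d) (q ^ (β - v d)) (pow_pos hq.pos _) (a d)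
      rw [Finset.sum_congr rfl hcards] at hb
      -- bound the sum via an injection into divisors m ×ˢ Icc 1 β
      set φ : ℕ → ℕ × ℕ := fun d => (d / q ^ v d, v d) with hφ
      have hinj : Set.InjOn φ D₁ := by
        intro d₁ hd₁ d₂ hd₂ hEq
        obtain ⟨_, _, _, e₁⟩ := hdec d₁ (by exact hd₁)
        obtain ⟨_, _, _, e₂⟩ := hdec d₂ (by exact hd₂)
        have h1' : d₁ / q ^ v d₁ = d₂ / q ^ v d₂ := congrArg Prod.fst hEq
        have h2' : v d₁ = v d₂ := congrArg Prod.snd hEq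
        rw [← e₁, ← e₂, h1', h2']
      have hmaps : D₁.image φ ⊆ m.divisors ×ˢ Finset.Icc 1 β := by
        intro pr hpr
        rw [Finset.mem_image] at hpr
        obtain ⟨d, hd, rfl⟩ := hpr
        obtain ⟨h1', h2', h3', _⟩ := hdec d hd
        rw [Finset.mem_product, Nat.mem_divisors, Finset.mem_Icc]
        exact ⟨⟨h3', hm0.ne'⟩, h1', h2'⟩
      have hsum1 : ∑ d ∈ D₁, q ^ (β - v d) = ∑ pr ∈ D₁.image φ, q ^ (β - pr.2) := by
        rw [Finset.sum_image (fun x hx y hy h => hinj hx hy h)]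
      have hsum2 : ∑ pr ∈ D₁.image φ, q ^ (β - pr.2)
          ≤ ∑ pr ∈ m.divisors ×ˢ Finset.Icc 1 β, q ^ (β - pr.2) :=
        Finset.sum_le_sum_of_subset hmaps
      have hsum3 : ∑ pr ∈ m.divisors ×ˢ Finset.Icc 1 β, q ^ (β - pr.2) = q ^ β - 1 := by
        rw [Finset.sum_product]
        have hc : ∀ e ∈ m.divisors, ∑ j ∈ Finset.Icc 1 β, q ^ (β - j)
            = ∑ i ∈ Finset.range β, q ^ i := fun e _ => sum_Icc_pow q β
        rw [Finset.sum_congr rfl hc, Finset.sum_const, smul_eq_mul]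
        have hcard : m.divisors.card = q - 1 := by omega
        rw [hcard]
        have := geom_aux q (by omega) β
        omega
      omega
    -- pick an untouched fiber y
    have hylt : T.card < (Finset.range (q ^ β)).card := by
      rw [Finset.card_range]
      have : 0 < q ^ β := pow_pos hq.pos β
      omega
    obtain ⟨y, hy, hyT⟩ : ∃ y ∈ Finset.range (q ^ β), y ∉ T := by
      by_contra hcon
      push_neg at hcon
      exact absurd (Finset.card_le_card fun z hz => hcon z hz) (by omega)
    rw [Finset.mem_range] at hy
    -- apply induction hypothesis to the q-free part
    set D₀ : Finset ℕ := D.filter (fun d => ¬ q ∣ d) with hD₀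
    have hD₀sub : D₀ ⊆ m.divisors := by
      intro d hd
      rw [hD₀, Finset.mem_filter] at hd
      obtain ⟨hdvd, hd0⟩ := hDdvd d hd.1
      rw [Nat.mem_divisors]
      have hcop : Nat.Coprime d (q ^ β) :=
        Nat.Coprime.pow_right β (((Nat.Prime.coprime_iff_not_dvd hq).mpr hd.2).symm)
      exact ⟨Nat.Coprime.dvd_of_dvd_mul_right hcop hdvd, hm0.ne'⟩
    obtain ⟨z, hz, hzunc⟩ := ih D₀ a hD₀sub (fun d hd => h1 d (Finset.mem_filter.mp hd).1)
    -- combine z and y by CRT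
    have hcopm : Nat.Coprime m (q ^ β) :=
      Nat.Coprime.pow_right β (((Nat.Prime.coprime_iff_not_dvd hq).mpr hqm).symm)
    obtain ⟨x0, hx0m, hx0q⟩ := Nat.chineseRemainder hcopm z y
    set x : ℕ := x0 % (m * q ^ β) with hx
    have hxlt : x < m * q ^ β := Nat.mod_lt _ hn0
    have hxx0 : x ≡ x0 [MOD m * q ^ β] := Nat.mod_modEq x0 (m * q ^ β)
    have hxm : x ≡ z [MOD m] := ((hxx0.of_dvd (Dvd.intro _ rfl)).trans hx0m)
    have hxq : x ≡ y [MOD q ^ β] := ((hxx0.of_dvd (Dvd.intro_left _ rfl)).trans hx0q)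
    refine ⟨x, hxlt, fun d hd hcontra => ?_⟩
    by_cases hqd : q ∣ d
    · -- d ∈ D₁ : y would be a touched fiber
      have hdD₁ : d ∈ D₁ := by rw [hD₁, Finset.mem_filter]; exact ⟨hd, hqd⟩
      obtain ⟨h1', h2', _, _⟩ := hdec d hdD₁
      obtain ⟨hdvd, hd0⟩ := hDdvd d hd
      have hqvd : (q ^ v d : ℕ) ∣ d := Nat.ordProj_dvd d q
      have hxq' : (x : ℤ) ≡ (y : ℤ) [ZMOD ((q ^ v d : ℕ) : ℤ)] := by
        have := hxq.of_dvd (pow_dvd_pow q h2')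
        exact_mod_cast Int.natCast_modEq_iff.mpr this
      have hyd : (y : ℤ) ≡ a d [ZMOD ((q ^ v d : ℕ) : ℤ)] := by
        have hred : (x : ℤ) ≡ a d [ZMOD ((q ^ v d : ℕ) : ℤ)] :=
          hcontra.of_dvd (Int.natCast_dvd_natCast.mpr hqvd)
        exact hxq'.symm.trans hred
      have : y ∈ T := by
        rw [hT]
        refine Finset.mem_biUnion.mpr ⟨d, hdD₁, ?_⟩
        rw [hf]
        simp only [Finset.mem_filter, Finset.mem_range]
        exact ⟨hy, hyd⟩
      exact hyT this
    · -- d ∈ D₀ : contradicts choice of z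
      have hdD₀ : d ∈ D₀ := by rw [hD₀, Finset.mem_filter]; exact ⟨hd, hqd⟩
      obtain ⟨hdvd', hd0⟩ := hDdvd d hd
      have hdm : d ∣ m := Nat.mem_divisors.mp (hD₀sub hdD₀) |>.1
      have hxd : (x : ℤ) ≡ (z : ℤ) [ZMOD ((d : ℕ) : ℤ)] := by
        have := hxm.of_dvd hdm
        exact_mod_cast Int.natCast_modEq_iff.mpr this
      exact hzunc d hdD₀ (hxd.symm.trans hcontra)
lemma crt_exists (e r : ℕ) (t : ℤ) (hcop : Nat.Coprime e r) :
    ∃ c : ℤ, (e : ℤ) ∣ c ∧ c ≡ t [ZMOD ((r : ℕ) : ℤ)] := by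
  obtain ⟨u, v, huv⟩ := (Nat.isCoprime_iff_coprime.mpr hcop : IsCoprime (e:ℤ) (r:ℤ))
  refine ⟨t * u * e, ⟨t * u, by ring⟩, ?_⟩
  rw [Int.modEq_iff_dvd]
  exact ⟨t * v, by linear_combination (-t) * huv⟩

lemma sunchain_cover {n : ℕ} (h : SunChain n) :
    ∃ a : ℕ → ℤ, ∀ x : ℤ,
      (∃ d ∈ n.divisors.erase 1, x ≡ a d [ZMOD (d : ℤ)]) ↔ ¬ (n : ℤ) ∣ x := by
  induction h with
  | one =>
    refine ⟨fun _ => 0, fun x => ?_⟩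
    simp [Nat.divisors_one]
  | step m q β hm hq hqm hβ hτ ih =>
    obtain ⟨a, ha⟩ := ih
    have hm0 : 0 < m := hm.pos
    have hq2 : 2 ≤ q := hq.two_le
    have hn0 : m * q ^ β ≠ 0 := by positivity
    have hcast : ((m * q ^ β : ℕ) : ℤ) = (m:ℤ) * (q:ℤ)^β := by push_cast; ring
    -- the labelling bijection s
    have hcard : m.divisors.card = (Finset.Icc 1 (q-1)).card := by
      rw [Nat.card_Icc]; omega
    set E := Finset.equivOfCardEq hcard with hE
    set s : ℕ → ℕ := fun e =>
      if h : e ∈ m.divisors then ((E ⟨e, h⟩ : {x // x ∈ Finset.Icc 1 (q-1)}) : ℕ) else 0 with hs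
    have hsmem : ∀ e ∈ m.divisors, s e ∈ Finset.Icc 1 (q-1) := by
      intro e he; rw [hs]; simp only [dif_pos he]; exact (E ⟨e, he⟩).2
    have hssurj : ∀ u ∈ Finset.Icc 1 (q-1), ∃ e ∈ m.divisors, s e = u := by
      intro u hu
      refine ⟨(E.symm ⟨u, hu⟩ : {x // x ∈ m.divisors}), (E.symm ⟨u, hu⟩).2, ?_⟩
      rw [hs]
      simp only [dif_pos (E.symm ⟨u, hu⟩).2]
      rw [show (⟨((E.symm ⟨u, hu⟩ : {x // x ∈ m.divisors}) : ℕ), (E.symm ⟨u, hu⟩).2⟩ :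
        {x // x ∈ m.divisors}) = E.symm ⟨u, hu⟩ from rfl, Equiv.apply_symm_apply]
    -- the CRT values
    have hcrt : ∀ e j : ℕ, ∃ c : ℤ, e ∈ m.divisors →
        ((e:ℤ) ∣ c ∧ c ≡ (q:ℤ)^(j-1) * (s e : ℤ) [ZMOD ((q:ℤ)^j)]) := by
      intro e j
      by_cases he : e ∈ m.divisors
      · have hqe : ¬ q ∣ e := fun hdvd => hqm (hdvd.trans (Nat.mem_divisors.mp he).1)
        have hcop : Nat.Coprime e (q^j) :=
          Nat.Coprime.pow_right _ (((hq.coprime_iff_not_dvd).mpr hqe).symm)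
        obtain ⟨c, hc1, hc2⟩ := crt_exists e (q^j) ((q:ℤ)^(j-1) * (s e : ℤ)) hcop
        rw [Nat.cast_pow] at hc2
        exact ⟨c, fun _ => ⟨hc1, hc2⟩⟩
      · exact ⟨0, fun h => absurd h he⟩
    choose c hc using hcrt
    set newa : ℕ → ℤ := fun d =>
      if q ∣ d then c (d / q ^ d.factorization q) (d.factorization q) else a d with hnewa
    refine ⟨newa, fun x => ?_⟩
    constructor
    · rintro ⟨d, hd, hxd⟩
      rw [Finset.mem_erase, Nat.mem_divisors] at hd
      obtain ⟨hd1, hdvd, _⟩ := hd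
      intro hnx
      have hMx : (m:ℤ) ∣ x := (dvd_mul_right (m:ℤ) ((q:ℤ)^β)).trans (hcast ▸ hnx)
      have hQx : (q:ℤ)^β ∣ x := (dvd_mul_left ((q:ℤ)^β) (m:ℤ)).trans (hcast ▸ hnx)
      by_cases hqd : q ∣ d
      · have hd0 : d ≠ 0 := by
          intro h0; rw [h0] at hdvd; exact hn0 (Nat.eq_zero_of_zero_dvd hdvd)
        obtain ⟨hj1, hjβ, hem, hqe, hself⟩ := divisor_decomp hq hqm hm0.ne' hdvd hd0 hqd
        set j := d.factorization q with hjdef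
        set e := d / q ^ j with hedef
        have hemem : e ∈ m.divisors := Nat.mem_divisors.mpr ⟨hem, hm0.ne'⟩
        obtain ⟨hec, hcmod⟩ := hc e j hemem
        have hnewad : newa d = c e j := if_pos hqd
        rw [hnewad] at hxd
        have hqjd : ((q:ℤ))^j ∣ (d:ℤ) := by
          refine ⟨(e:ℤ), ?_⟩
          exact_mod_cast congrArg (Nat.cast : ℕ → ℤ) hself.symm
        have hx_cej : (x:ℤ) ≡ c e j [ZMOD ((q:ℤ)^j)] := hxd.of_dvd hqjd
        have hqjx : ((q:ℤ))^j ∣ x := (pow_dvd_pow _ hjβ).trans hQx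
        have hqjc : (q:ℤ)^j ∣ c e j := by
          have h5 : (q:ℤ)^j ∣ (c e j - x) := hx_cej.dvd
          have := dvd_add h5 hqjx
          simpa using this
        have h2 : (q:ℤ)^j ∣ (q:ℤ)^(j-1) * (s e : ℤ) := by
          have h5 : (q:ℤ)^j ∣ ((q:ℤ)^(j-1) * (s e : ℤ) - c e j) := hcmod.dvd
          have := dvd_add h5 hqjc
          simpa using this
        have hj' : j - 1 + 1 = j := by omega
        rw [← hj', pow_succ] at h2
        have h3 : (q:ℤ) ∣ (s e : ℤ) :=
          (mul_dvd_mul_iff_left (pow_ne_zero (j-1) (show (q:ℤ) ≠ 0 by exact_mod_cast hq.pos.ne'))).mp h2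
        have h4 : q ∣ s e := Int.natCast_dvd_natCast.mp h3
        have h6 := hsmem e hemem
        rw [Finset.mem_Icc] at h6
        have h7 : q ≤ s e := Nat.le_of_dvd (by omega) h4
        omega
      · have hnewad : newa d = a d := if_neg hqd
        have hdm : d ∣ m := by
          have hcop : Nat.Coprime d (q ^ β) :=
            Nat.Coprime.pow_right β (((hq.coprime_iff_not_dvd).mpr hqd).symm)
          exact Nat.Coprime.dvd_of_dvd_mul_right hcop hdvd
        have hmem' : ∃ d' ∈ m.divisors.erase 1, x ≡ a d' [ZMOD ((d':ℕ) : ℤ)] :=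
          ⟨d, Finset.mem_erase.mpr ⟨hd1, Nat.mem_divisors.mpr ⟨hdm, hm0.ne'⟩⟩, hnewad ▸ hxd⟩
        exact (ha x).mp hmem' hMx
    · intro hnx
      by_cases hMx : (m:ℤ) ∣ x
      · have hcopMQ : IsCoprime ((m:ℕ):ℤ) (((q^β:ℕ)):ℤ) :=
          Nat.isCoprime_iff_coprime.mpr
            (Nat.Coprime.pow_right β (((hq.coprime_iff_not_dvd).mpr hqm).symm))
        have hQx : ¬ (q:ℤ)^β ∣ x := by
          intro hQ
          apply hnx
          rw [hcast]
          have := hcopMQ.mul_dvd hMx (by push_cast; exact hQ)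
          push_cast at this
          exact this
        -- minimal j with ¬ q^j ∣ x
        have hex : ∃ j, ¬ (q:ℤ)^j ∣ x := ⟨β, hQx⟩
        set j := Nat.find hex with hjdef
        have hPj : ¬ (q:ℤ)^j ∣ x := Nat.find_spec hex
        have hj1 : 1 ≤ j := by
          by_contra hcon
          have hj0 : j = 0 := by omega
          rw [hj0] at hPj
          exact hPj (by simpa using one_dvd x)
        have hjβ : j ≤ β := Nat.find_le hQx
        have hPj1 : (q:ℤ)^(j-1) ∣ x := by
          by_contra hcon
          exact Nat.find_min hex (show j - 1 < j by omega) hcon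
        obtain ⟨w, hw⟩ := hPj1
        have hj' : j - 1 + 1 = j := by omega
        have hqZ0 : ((q:ℤ)) ≠ 0 := by exact_mod_cast hq.pos.ne'
        have hqw : ¬ (q:ℤ) ∣ w := by
          rintro ⟨w', hw'⟩
          apply hPj
          refine ⟨w', ?_⟩
          rw [hw, hw', show (q:ℤ)^j = (q:ℤ)^(j-1) * q from by rw [← pow_succ, hj']]
          ring
        have hwq0 : (0:ℤ) ≤ w % (q:ℤ) := Int.emod_nonneg w hqZ0
        have hwqlt : w % (q:ℤ) < (q:ℤ) := Int.emod_lt_of_pos w (by exact_mod_cast hq.pos)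
        set u : ℕ := (w % (q:ℤ)).toNat with hu
        have hucast : ((u:ℕ):ℤ) = w % (q:ℤ) := Int.toNat_of_nonneg hwq0
        have hune : w % (q:ℤ) ≠ 0 := by
          intro h0
          exact hqw (Int.dvd_of_emod_eq_zero h0)
        have humem : u ∈ Finset.Icc 1 (q-1) := by
          rw [Finset.mem_Icc]
          have h1' : (1:ℤ) ≤ (u:ℤ) := by omega
          have h2' : (u:ℤ) ≤ (q:ℤ) - 1 := by omega
          constructor
          · exact_mod_cast h1'
          · have : (u:ℤ) ≤ ((q - 1 : ℕ) : ℤ) := by push_cast; omega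
            exact_mod_cast this
        obtain ⟨e, hemem, hse⟩ := hssurj u humem
        have hedvd : e ∣ m := (Nat.mem_divisors.mp hemem).1
        have he0 : e ≠ 0 := by
          intro h0; rw [h0] at hedvd; exact hm0.ne' (Nat.eq_zero_of_zero_dvd hedvd)
        have hqe : ¬ q ∣ e := fun hdvd => hqm (hdvd.trans hedvd)
        set d := e * q ^ j with hd
        have hfact : d.factorization q = j := by
          rw [hd, Nat.factorization_mul he0 (pow_ne_zero j hq.pos.ne'), hq.factorization_pow]
          simp [Nat.factorization_eq_zero_of_not_dvd hqe]
        have hdiv : d / q ^ j = e := by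
          exact Nat.div_eq_of_eq_mul_left (pow_pos hq.pos j) hd
        have hqjd' : q ^ j ∣ d := ⟨e, by rw [hd]; ring⟩
        have hqd : q ∣ d :=
          dvd_trans (dvd_pow_self q (Nat.one_le_iff_ne_zero.mp hj1)) hqjd'
        refine ⟨d, ?_, ?_⟩
        · rw [Finset.mem_erase, Nat.mem_divisors]
          refine ⟨?_, mul_dvd_mul hedvd (pow_dvd_pow q hjβ), hn0⟩
          intro h1'
          have hq1 : q ∣ 1 := h1' ▸ hqd
          exact absurd (Nat.le_of_dvd one_pos hq1) (by omega)
        ·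
          have hnewad : newa d = c e j := by
            rw [hnewa]
            simp only [if_pos hqd, hfact, hdiv]
          rw [hnewad]
          obtain ⟨hec, hcmod⟩ := hc e j hemem
          rw [Int.modEq_iff_dvd]
          have hdcast : ((d:ℕ):ℤ) = (e:ℤ) * (q:ℤ)^j := by rw [hd]; push_cast; ring
          rw [hdcast]
          have hcop' : IsCoprime ((e:ℕ):ℤ) ((q:ℤ)^j) := by
            have : IsCoprime ((e:ℕ):ℤ) (((q^j:ℕ)):ℤ) :=
              Nat.isCoprime_iff_coprime.mpr
                (Nat.Coprime.pow_right j (((hq.coprime_iff_not_dvd).mpr hqe).symm))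
            push_cast at this
            exact this
          refine hcop'.mul_dvd ?_ ?_
          · exact dvd_sub hec ((Int.natCast_dvd_natCast.mpr hedvd).trans hMx)
          · -- q^j ∣ c e j - x
            have hxmod : x ≡ (q:ℤ)^(j-1) * (u:ℤ) [ZMOD ((q:ℤ)^j)] := by
              rw [Int.modEq_iff_dvd]
              have hdw : (q:ℤ) ∣ ((u:ℤ) - w) := by
                rw [hucast]
                refine ⟨-(w / (q:ℤ)), ?_⟩
                have := Int.emod_add_mul_ediv w (q:ℤ)
                linarith
              obtain ⟨t, ht⟩ := hdw
              refine ⟨t, ?_⟩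
              rw [hw, ← hj', pow_succ]
              calc (q:ℤ)^(j-1) * (u:ℤ) - (q:ℤ)^(j-1) * w = (q:ℤ)^(j-1) * ((u:ℤ) - w) := by ring
                _ = (q:ℤ)^(j-1) * ((q:ℤ) * t) := by rw [ht]
                _ = (q:ℤ)^(j-1) * (q:ℤ) * t := by ring
            have hfinal : x ≡ c e j [ZMOD ((q:ℤ)^j)] := by
              have h8 : (q:ℤ)^(j-1) * ((s e : ℕ):ℤ) = (q:ℤ)^(j-1) * (u:ℤ) := by rw [hse]
              exact hxmod.trans (h8 ▸ hcmod).symm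
            exact hfinal.dvd
      · obtain ⟨d, hd, hxd⟩ := (ha x).mpr hMx
        rw [Finset.mem_erase, Nat.mem_divisors] at hd
        refine ⟨d, ?_, ?_⟩
        · rw [Finset.mem_erase, Nat.mem_divisors]
          exact ⟨hd.1, hd.2.1.trans (dvd_mul_right m (q^β)), hn0⟩
        · have hqd : ¬ q ∣ d := fun hdvd => hqm (hdvd.trans hd.2.1)
          rw [hnewa]
          simp only [if_neg hqd]
          exact hxd
lemma sunchain_of_hyps (k : ℕ) (hk : 0 < k) (p α : Fin k → ℕ)
    (hp : ∀ i, (p i).Prime) (hmono : StrictMono p) (h2 : p ⟨0, hk⟩ = 2)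
    (hα : ∀ i, 1 ≤ α i)
    (hcond : ∀ i : Fin k, 0 < i.val →
      p i = (∏ j ∈ Finset.Iio i, p j ^ α j).divisors.card + 1) :
    SunChain (∏ i, p i ^ α i) := by
  have key : ∀ i ≤ k, SunChain (∏ j ∈ Finset.univ.filter (fun j : Fin k => (j:ℕ) < i), p j ^ α j) := by
    intro i
    induction i with
    | zero =>
      intro _
      have : Finset.univ.filter (fun j : Fin k => (j:ℕ) < 0) = ∅ := by
        ext j; simp
      rw [this, Finset.prod_empty]
      exact SunChain.one
    | succ i ihi =>
      intro hik
      have hi : i < k := hik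
      have hstep : Finset.univ.filter (fun j : Fin k => (j:ℕ) < i + 1)
          = insert ⟨i, hi⟩ (Finset.univ.filter (fun j : Fin k => (j:ℕ) < i)) := by
        ext j
        simp only [Finset.mem_filter, Finset.mem_insert, Finset.mem_univ, true_and, Fin.ext_iff]
        omega
      rw [hstep, Finset.prod_insert (by simp)]
      rw [mul_comm]
      set m := ∏ j ∈ Finset.univ.filter (fun j : Fin k => (j:ℕ) < i), p j ^ α j with hm
      have hchainm : SunChain m := ihi (Nat.le_of_lt hi)
      have hqm : ¬ (p ⟨i, hi⟩) ∣ m := by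
        intro hdvd
        obtain ⟨j, hj, hdj⟩ := (Nat.Prime.prime (hp ⟨i, hi⟩)).exists_mem_finset_dvd hdvd
        rw [Finset.mem_filter] at hj
        have hdj' : p ⟨i, hi⟩ ∣ p j := (Nat.Prime.dvd_of_dvd_pow (hp _) hdj)
        have heq : p ⟨i, hi⟩ = p j := (Nat.prime_dvd_prime_iff_eq (hp _) (hp _)).mp hdj'
        have hlt : p j < p ⟨i, hi⟩ := hmono (show j < ⟨i, hi⟩ by rw [Fin.lt_def]; exact hj.2)
        omega
      have hτ : m.divisors.card + 1 = p ⟨i, hi⟩ := by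
        rcases Nat.eq_zero_or_pos i with hi0 | hipos
        · subst hi0
          have : Finset.univ.filter (fun j : Fin k => (j:ℕ) < 0) = ∅ := by ext j; simp
          rw [hm, this, Finset.prod_empty, Nat.divisors_one]
          rw [show (⟨0, hi⟩ : Fin k) = ⟨0, hk⟩ from rfl, h2]
          simp
        · have hIio : Finset.Iio (⟨i, hi⟩ : Fin k) = Finset.univ.filter (fun j : Fin k => (j:ℕ) < i) := by
            ext j
            simp [Finset.mem_Iio, Finset.mem_filter, Fin.lt_def]
          have := hcond ⟨i, hi⟩ hipos
          rw [hIio] at this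
          rw [hm]
          omega
      exact SunChain.step m (p ⟨i, hi⟩) (α ⟨i, hi⟩) hchainm (hp _) hqm (hα _) hτ
  have huniv : Finset.univ.filter (fun j : Fin k => (j:ℕ) < k) = (Finset.univ : Finset (Fin k)) := by
    ext j; simp [j.isLt]
  have := key k le_rfl
  rwa [huniv] at this

/-- Sun-almost-covering numbers are almost-covering: if `n = p₁^α₁ ⋯ p_k^α_k` with
`2 = p₁ < p₂ < ⋯ < p_k` and `p_i = τ(p₁^α₁ ⋯ p_{i-1}^α_{i-1}) + 1` for each `i > 1`,
then `r(n) = n - 1`. -/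
theorem stmt7 (k : ℕ) (hk : 0 < k) (p α : Fin k → ℕ)
    (hp : ∀ i, (p i).Prime) (hmono : StrictMono p) (h2 : p ⟨0, hk⟩ = 2)
    (hα : ∀ i, 1 ≤ α i)
    (hcond : ∀ i : Fin k, 0 < i.val →
      p i = (∏ j ∈ Finset.Iio i, p j ^ α j).divisors.card + 1) :
    maxCovered (∏ i, p i ^ α i) = (∏ i, p i ^ α i) - 1 := by
  set n := ∏ i, p i ^ α i with hn
  have hchain : SunChain n := sunchain_of_hyps k hk p α hp hmono h2 hα hcond
  have hnpos : 0 < n := hchain.pos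
  set S : Set ℕ := {k | ∃ (D : Finset ℕ) (a : ℕ → ℤ),
    D ⊆ n.divisors ∧ (∀ m ∈ D, 1 < m) ∧ k = coveredCount n D a} with hS
  -- upper bound on all elements of S
  have hub : ∀ s ∈ S, s ≤ n - 1 := by
    rintro s ⟨D, a, hD, h1, rfl⟩
    obtain ⟨x, hx, hunc⟩ := sunchain_uncovered hchain D a hD h1
    have hsubset : (Finset.range n).filter
        (fun y : ℕ => ∃ m ∈ D, (y : ℤ) ≡ a m [ZMOD ((m:ℕ) : ℤ)]) ⊆ (Finset.range n).erase x := by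
      intro y hy
      rw [Finset.mem_filter] at hy
      rw [Finset.mem_erase]
      refine ⟨?_, hy.1⟩
      rintro rfl
      obtain ⟨d, hd, hyd⟩ := hy.2
      exact hunc d hd hyd
    rw [coveredCount_eq]
    calc ((Finset.range n).filter
        (fun y : ℕ => ∃ m ∈ D, (y : ℤ) ≡ a m [ZMOD ((m:ℕ) : ℤ)])).card
        ≤ ((Finset.range n).erase x).card := Finset.card_le_card hsubset
      _ = n - 1 := by rw [Finset.card_erase_of_mem (Finset.mem_range.mpr hx), Finset.card_range]
  -- n - 1 is attained
  have hmem : n - 1 ∈ S := by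
    obtain ⟨a, ha⟩ := sunchain_cover hchain
    refine ⟨n.divisors.erase 1, a, Finset.erase_subset 1 n.divisors, ?_, ?_⟩
    · intro d hd
      rw [Finset.mem_erase, Nat.mem_divisors] at hd
      have : 0 < d := Nat.pos_of_dvd_of_pos hd.2.1 hnpos
      omega
    · have hfilter : (Finset.range n).filter
          (fun y : ℕ => ∃ m ∈ n.divisors.erase 1, (y : ℤ) ≡ a m [ZMOD ((m:ℕ) : ℤ)])
          = (Finset.range n).erase 0 := by
        ext y
        rw [Finset.mem_filter, Finset.mem_erase]
        constructor
        · rintro ⟨hy, hcov⟩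
          refine ⟨fun h0 => ?_, hy⟩
          subst h0
          exact (ha 0).mp (by simpa using hcov) (dvd_zero _)
        · rintro ⟨hy0, hy⟩
          have hylt : y < n := Finset.mem_range.mp hy
          refine ⟨hy, (ha y).mpr fun hdvd => ?_⟩
          have h' : n ∣ y := Int.natCast_dvd_natCast.mp hdvd
          have := Nat.eq_zero_of_dvd_of_lt h' hylt
          omega
      rw [coveredCount_eq, hfilter, Finset.card_erase_of_mem (Finset.mem_range.mpr hnpos),
        Finset.card_range]
  rw [maxCovered]
  exact le_antisymm (csSup_le ⟨n - 1, hmem⟩ hub) (le_csSup ⟨n - 1, hub⟩ hmem)
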